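/- arXiv:0903.2871 — 2 statements merged into one kernel-verified Lean document; each statement's English description precedes it below -/
import Mathlib

section
/- Let G and G' be topological groups, with G connected and the topology of G' T1. Let Γ' be a countable subgroup of G', let φ : G → G' be a continuous map, and let γ ∈ G be an element such that φ(g)⁻¹ · φ(g·γ) ∈ Γ' for every g ∈ G. Then φ(g·γ) = φ(g) · φ(e)⁻¹ · φ(γ) for every g ∈ G, where e is the identity element of G. -/
/-!
The map `g ↦ (φ g)⁻¹ * φ (g * γ)` is continuous with values in the countable set `Γ'`.
A T1 topological group is Tychonoff (its right uniformity induces its topology), and a countable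
Tychonoff space is totally separated, since a continuous real function on it omits some value
in every interval. So the map is constant on the connected group `G`; evaluate it at `1`.
-/

open Set

theorem IsTopologicalGroup.completelyRegularSpace (G : Type*) [Group G] [TopologicalSpace G]
    [IsTopologicalGroup G] : CompletelyRegularSpace G :=
  CompletelyRegularSpace.of_exists_uniformSpace ⟨IsTopologicalGroup.rightUniformSpace G, rfl⟩

theorem Continuous.eq_of_countable_range {X Y : Type*} [TopologicalSpace X] [PreconnectedSpace X]
    [TopologicalSpace Y] [T35Space Y] {f : X → Y} (hf : Continuous f)
    (hrange : (range f).Countable) (a b : X) : f a = f b := by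
  have : TotallySeparatedSpace (range f) := hrange.totallySeparatedSpace
  exact totallyDisconnectedSpace_subtype_iff.1 inferInstance (range f) Subset.rfl
    (isPreconnected_range hf) (mem_range_self a) (mem_range_self b)

/-- Step (b) of Lemma 4.1: if `φ : G → G'` is continuous, `G` connected, `G'` a T1
topological group with countable subgroup `Γ'`, and `(φ g)⁻¹ * φ (g * γ) ∈ Γ'` for all
`g`, then `φ (g * γ) = φ g * (φ 1)⁻¹ * φ γ` for all `g`. -/
theorem phi_mul_gamma_eq
    {G G' : Type*} [Group G] [TopologicalSpace G] [IsTopologicalGroup G] [ConnectedSpace G]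
    [Group G'] [TopologicalSpace G'] [IsTopologicalGroup G'] [T1Space G']
    (Γ' : Subgroup G') (hΓ' : (Γ' : Set G').Countable)
    (φ : G → G') (hφ : Continuous φ) (γ : G)
    (hmem : ∀ g : G, (φ g)⁻¹ * φ (g * γ) ∈ Γ') :
    ∀ g : G, φ (g * γ) = φ g * (φ 1)⁻¹ * φ γ := by
  intro g
  have : T35Space G' := { IsTopologicalGroup.completelyRegularSpace G' with }
  have hconst : (φ g)⁻¹ * φ (g * γ) = (φ 1)⁻¹ * φ (1 * γ) :=
    (hφ.inv.mul (hφ.comp (continuous_mul_const γ))).eq_of_countable_range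
      (hΓ'.mono (range_subset_iff.2 hmem)) g 1
  rw [one_mul] at hconst
  rw [mul_assoc, ← hconst, mul_inv_cancel_left]
end

section
/- Let G and G' be topological groups, with G connected and G' Hausdorff. Let Γ be a dense subgroup of G and Γ' a countable subgroup of G'. Let φ : G → G' be a homeomorphism such that φ(g)⁻¹ · φ(g·γ) ∈ Γ' for every g ∈ G and every γ ∈ Γ. Then the map ψ : G → G' defined by ψ(g) = φ(e)⁻¹ · φ(g), where e is the identity of G, is an isomorphism of topological groups: ψ is a bijective group homomorphism which is a homeomorphism. -/
/-! Fix `γ ∈ Γ`. The map `g ↦ φ(g)⁻¹ φ(gγ)` is continuous on the connected group `G` and takes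
values in the countable set `Γ'`; countable subsets of a Hausdorff topological group (which is
regular) are totally disconnected, so the map is constant, equal to its value `φ(1)⁻¹ φ(γ)` at `1`.
Hence `ψ(gγ) = ψ(g) ψ(γ)` for all `g ∈ G`, `γ ∈ Γ`, and both sides are continuous in `γ`, so the
identity extends from the dense set `Γ` to all of `G`. -/

open Set

theorem Continuous.apply_eq_of_countable_range {X Y : Type*} [TopologicalSpace X]
    [PreconnectedSpace X] [TopologicalSpace Y] [T3Space Y] {f : X → Y} (hf : Continuous f)
    (hc : (range f).Countable) (x y : X) : f x = f y :=
  have : Countable (range f) := hc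
  totallyDisconnectedSpace_subtype_iff.mp inferInstance _ subset_rfl (isPreconnected_range hf)
    (mem_range_self x) (mem_range_self y)

theorem Continuous.inv_mul_apply_mul_eq_of_countable {G G' : Type*} [Group G]
    [TopologicalSpace G] [ContinuousMul G] [PreconnectedSpace G] [Group G'] [TopologicalSpace G']
    [IsTopologicalGroup G'] [T2Space G'] {f : G → G'} (hf : Continuous f) {S : Set G'}
    (hS : S.Countable) {γ : G} (hγ : ∀ g, (f g)⁻¹ * f (g * γ) ∈ S) (g : G) :
    (f g)⁻¹ * f (g * γ) = (f 1)⁻¹ * f γ := by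
  have hcont : Continuous fun g => (f g)⁻¹ * f (g * γ) :=
    hf.inv.mul (hf.comp (continuous_mul_const γ))
  simpa only [one_mul] using hcont.apply_eq_of_countable_range
    (hS.mono (range_subset_iff.mpr hγ)) g 1

theorem Continuous.map_mul_of_dense {G H : Type*} [Mul G] [TopologicalSpace G]
    [ContinuousMul G] [Mul H] [TopologicalSpace H] [ContinuousMul H] [T2Space H] {f : G → H}
    (hf : Continuous f) {S : Set G} (hS : Dense S) (hmul : ∀ g, ∀ s ∈ S, f (g * s) = f g * f s)
    (g h : G) : f (g * h) = f g * f h :=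
  congrFun ((hf.comp (continuous_const_mul g)).ext_on hS (continuous_const.mul hf) (hmul g)) h

/-- Topological-group content of Lemma 4.1: if `φ : G ≃ₜ G'` is a homeomorphism of
topological groups, `G` connected with dense subgroup `Γ`, `G'` Hausdorff with countable
subgroup `Γ'`, and `φ` sends `Γ`-cosets into `Γ'`-cosets, then `ψ g = (φ 1)⁻¹ * φ g` is a
bijective group homomorphism which is a homeomorphism. -/
theorem topgroup_iso_of_equivariant_homeomorph
    {G G' : Type*} [Group G] [TopologicalSpace G] [IsTopologicalGroup G] [ConnectedSpace G]
    [Group G'] [TopologicalSpace G'] [IsTopologicalGroup G'] [T2Space G']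
    (Γ : Subgroup G) (hΓdense : Dense (Γ : Set G))
    (Γ' : Subgroup G') (hΓ'count : (Γ' : Set G').Countable)
    (φ : G ≃ₜ G')
    (hequiv : ∀ g : G, ∀ γ ∈ Γ, (φ g)⁻¹ * φ (g * γ) ∈ Γ') :
    (∀ g h : G, (φ 1)⁻¹ * φ (g * h) = ((φ 1)⁻¹ * φ g) * ((φ 1)⁻¹ * φ h)) ∧
      Function.Bijective (fun g : G => (φ 1)⁻¹ * φ g) ∧
      IsHomeomorph (fun g : G => (φ 1)⁻¹ * φ g) := by
  let ψ : G ≃ₜ G' := φ.trans (Homeomorph.mulLeft (φ 1)⁻¹)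
  have hcoset : ∀ g, ∀ γ ∈ Γ, ψ (g * γ) = ψ g * ψ γ := fun g γ hγ => by
    have hconst := φ.continuous.inv_mul_apply_mul_eq_of_countable hΓ'count (hequiv · γ hγ) g
    calc ψ (g * γ) = ψ g * ((φ g)⁻¹ * φ (g * γ)) := by simp [ψ, mul_assoc]
      _ = ψ g * ψ γ := by rw [hconst]; rfl
  exact ⟨ψ.continuous.map_mul_of_dense hΓdense hcoset, ψ.bijective, ψ.isHomeomorph⟩
end
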